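/- arXiv:quant-ph/0105108 — 6 statements merged into one kernel-verified Lean document; each statement's English description precedes it below -/
import Mathlib

section
/- Let (Σ, L, ξ) be a state property system and κ its Cartan map. Then the family F = κ(L) = {κ(a) | a ∈ L} of subsets of Σ contains Σ and ∅ and is closed under arbitrary intersections: for every family (F_i) of members of F, ⋂_i F_i ∈ F. That is, F is a closure system on Σ. -/
/-- The image of the Cartan map of a state property system is a
closure system on the set of states. -/
theorem cartan_image_closure_system
    {S : Type} {L : Type} [CompleteLattice L] (ξ : S → Set L)
    (htop : ∀ p : S, ⊤ ∈ ξ p)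
    (hbot : ∀ p : S, ⊥ ∉ ξ p)
    (hinf : ∀ (p : S) (A : Set L), (∀ a ∈ A, a ∈ ξ p) ↔ sInf A ∈ ξ p)
    (hord : ∀ a b : L, a ≤ b ↔ ∀ r : S, a ∈ ξ r → b ∈ ξ r) :
    (Set.univ : Set S) ∈ {F : Set S | ∃ a : L, F = {p : S | a ∈ ξ p}} ∧
    (∅ : Set S) ∈ {F : Set S | ∃ a : L, F = {p : S | a ∈ ξ p}} ∧
    ∀ (I : Type) (G : I → Set S),
      (∀ i : I, G i ∈ {F : Set S | ∃ a : L, F = {p : S | a ∈ ξ p}}) →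
      (⋂ i : I, G i) ∈ {F : Set S | ∃ a : L, F = {p : S | a ∈ ξ p}} := by
  refine ⟨⟨⊤, by ext p; simp [htop p]⟩, ⟨⊥, by ext p; simp [hbot p]⟩, ?_⟩
  intro I G hG
  choose a ha using hG
  refine ⟨⨅ i, a i, ?_⟩
  ext p
  simp only [Set.mem_iInter, Set.mem_setOf_eq, iInf, ← hinf p, Set.forall_mem_range]
  constructor
  · intro h i; have := h i; rw [ha i] at this; exact this
  · intro h i; rw [ha i]; exact h i
end

section
/- Let (Σ, L, ξ) and (Σ', L', ξ') be state property systems and let (m, n) be a morphism from (Σ', L', ξ') to (Σ, L, ξ), i.e. m : Σ' → Σ and n : L → L' satisfy a ∈ ξ(m(p')) iff n(a) ∈ ξ'(p') for all a ∈ L and p' ∈ Σ'. Then: (i) for p', q' ∈ Σ', if ξ'(q') ⊆ ξ'(p') then ξ(m(q')) ⊆ ξ(m(p')); (ii) for a, b ∈ L, a ≤ b implies n(a) ≤ n(b); (iii) for every subset A ⊆ L, n(⨅ A) = ⨅ {n(a) | a ∈ A}; (iv) n(I) = I' and n(0) = 0'. -/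
/-- Properties of a morphism `(m, n)` of state property systems:
it preserves the state implication, the property implication, arbitrary
infima of properties, and top and bottom. -/
theorem morphism_properties
    {S L S' L' : Type*} [CompleteLattice L] [CompleteLattice L']
    (ξ : S → Set L) (ξ' : S' → Set L')
    (htop : ∀ p : S, ⊤ ∈ ξ p)
    (hbot : ∀ p : S, ⊥ ∉ ξ p)
    (hinf : ∀ (p : S) (A : Set L), (∀ a ∈ A, a ∈ ξ p) ↔ sInf A ∈ ξ p)
    (hord : ∀ a b : L, a ≤ b ↔ ∀ r : S, a ∈ ξ r → b ∈ ξ r)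
    (htop' : ∀ p : S', ⊤ ∈ ξ' p)
    (hbot' : ∀ p : S', ⊥ ∉ ξ' p)
    (hinf' : ∀ (p : S') (A : Set L'), (∀ a ∈ A, a ∈ ξ' p) ↔ sInf A ∈ ξ' p)
    (hord' : ∀ a b : L', a ≤ b ↔ ∀ r : S', a ∈ ξ' r → b ∈ ξ' r)
    (m : S' → S) (n : L → L')
    (hmn : ∀ (a : L) (p' : S'), a ∈ ξ (m p') ↔ n a ∈ ξ' p') :
    (∀ p' q' : S', ξ' q' ⊆ ξ' p' → ξ (m q') ⊆ ξ (m p')) ∧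
    (∀ a b : L, a ≤ b → n a ≤ n b) ∧
    (∀ A : Set L, n (sInf A) = sInf (n '' A)) ∧
    n ⊤ = ⊤ ∧
    n ⊥ = ⊥ := by
  have hmono : ∀ a b : L, a ≤ b → n a ≤ n b := by
    intro a b hab
    rw [hord']
    intro r hr
    exact (hmn b r).1 ((hord a b).1 hab (m r) ((hmn a r).2 hr))
  refine ⟨?_, hmono, ?_, ?_, ?_⟩
  · intro p' q' hsub a ha
    exact (hmn a p').2 (hsub ((hmn a q').1 ha))
  · intro A
    apply le_antisymm
    · apply le_sInf
      rintro b ⟨a, haA, rfl⟩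
      exact hmono _ _ (sInf_le haA)
    · rw [hord']
      intro r hr
      have h1 : ∀ b ∈ n '' A, b ∈ ξ' r := (hinf' r (n '' A)).2 hr
      have h2 : sInf A ∈ ξ (m r) := by
        rw [← hinf]
        intro a ha
        exact (hmn a r).2 (h1 _ ⟨a, ha, rfl⟩)
      exact (hmn _ r).1 h2
  · apply le_antisymm le_top
    rw [hord']
    intro r _
    exact (hmn ⊤ r).1 (htop (m r))
  · apply le_antisymm _ bot_le
    rw [hord']
    intro r hr
    exact absurd ((hmn ⊥ r).2 hr) (hbot (m r))
end

section
/- Let (Σ, L, ξ) be a state property system and define s_ξ : Σ → L by s_ξ(p) = ⨅ ξ(p). Then the following are equivalent: (1) ξ is injective; (2) s_ξ is injective and for all p, q ∈ Σ, ξ(q) ⊆ ξ(p) iff s_ξ(p) ≤ s_ξ(q). Moreover, the order equivalence 'ξ(q) ⊆ ξ(p) iff s_ξ(p) ≤ s_ξ(q)' holds in every state property system. -/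
/-- For a state property system with `s_ξ p = ⨅ ξ p`:
`ξ` is injective iff `s_ξ` is injective and reflects the state implication
order; moreover the order equivalence `ξ q ⊆ ξ p ↔ s_ξ p ≤ s_ξ q` always
holds. -/
theorem state_embedding_characterization
    {S L : Type*} [CompleteLattice L] (ξ : S → Set L)
    (htop : ∀ p : S, ⊤ ∈ ξ p)
    (hbot : ∀ p : S, ⊥ ∉ ξ p)
    (hinf : ∀ (p : S) (A : Set L), (∀ a ∈ A, a ∈ ξ p) ↔ sInf A ∈ ξ p)
    (hord : ∀ a b : L, a ≤ b ↔ ∀ r : S, a ∈ ξ r → b ∈ ξ r) :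
    (let s : S → L := fun p => sInf (ξ p)
    (Function.Injective ξ ↔
      (Function.Injective s ∧ ∀ p q : S, ξ q ⊆ ξ p ↔ s p ≤ s q)) ∧
    (∀ p q : S, ξ q ⊆ ξ p ↔ s p ≤ s q)) := by
  intro s
  have hmem : ∀ p : S, s p ∈ ξ p := fun p => (hinf p (ξ p)).mp (fun a ha => ha)
  have horder : ∀ p q : S, ξ q ⊆ ξ p ↔ s p ≤ s q := by
    intro p q
    constructor
    · intro h
      exact sInf_le_sInf h
    · intro h a ha
      have h1 : s q ≤ a := sInf_le ha
      exact (hord (s p) a).mp (le_trans h h1) p (hmem p)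
  refine ⟨?_, horder⟩
  constructor
  · intro hξ
    refine ⟨?_, horder⟩
    intro p q h
    apply hξ
    apply Set.Subset.antisymm
    · exact (horder q p).mpr (le_of_eq h.symm)
    · exact (horder p q).mpr (le_of_eq h)
  · rintro ⟨hs, -⟩ p q h
    apply hs
    simp only [s, h]
end

section
/- Let (Σ, L, ξ) be a state property system, s_ξ(p) = ⨅ ξ(p), and Σ^ξ = s_ξ(Σ) = {⨅ ξ(p) | p ∈ Σ} ⊆ L. Then 0 ∉ Σ^ξ, and Σ^ξ is an order-generating subset of L: for every a ∈ L, a = ⋁ {x ∈ Σ^ξ | x ≤ a}. -/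
/-- In a state property system, the set
`Σ^ξ = {⨅ ξ p | p ∈ Σ}` of strongest actual properties does not contain `⊥`
and is order-generating in `L`: every `a ∈ L` is the supremum of the elements
of `Σ^ξ` below it. -/
theorem states_order_generating
    {S L : Type*} [CompleteLattice L] (ξ : S → Set L)
    (htop : ∀ p : S, ⊤ ∈ ξ p)
    (hbot : ∀ p : S, ⊥ ∉ ξ p)
    (hinf : ∀ (p : S) (A : Set L), (∀ a ∈ A, a ∈ ξ p) ↔ sInf A ∈ ξ p)
    (hord : ∀ a b : L, a ≤ b ↔ ∀ r : S, a ∈ ξ r → b ∈ ξ r) :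
    (⊥ : L) ∉ Set.range (fun p : S => sInf (ξ p)) ∧
    ∀ a : L, a = sSup {x | x ∈ Set.range (fun p : S => sInf (ξ p)) ∧ x ≤ a} := by
  have hmem : ∀ p : S, sInf (ξ p) ∈ ξ p := fun p =>
    (hinf p (ξ p)).mp (fun a ha => ha)
  constructor
  · rintro ⟨p, hp⟩
    exact hbot p (hp ▸ hmem p)
  · intro a
    apply le_antisymm
    · rw [hord]
      intro r har
      have h1 : sInf (ξ r) ≤ a := sInf_le har
      have h2 : sInf (ξ r) ≤ sSup {x | x ∈ Set.range (fun p : S => sInf (ξ p)) ∧ x ≤ a} :=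
        le_sSup ⟨⟨r, rfl⟩, h1⟩
      exact (hord _ _).mp h2 r (hmem r)
    · exact sSup_le fun x hx => hx.2
end

section
/- Let L be a complete lattice and Σ ⊆ L a subset with 0 ∉ Σ that is order-generating, i.e. a = ⋁{x ∈ Σ | x ≤ a} for every a ∈ L. Define ξ : Σ → P(L) by ξ(p) = [p, I] = {a ∈ L | p ≤ a}. Then (Σ, L, ξ) is a state determined state property system: for every p ∈ Σ, I ∈ ξ(p) and 0 ∉ ξ(p); for every subset A ⊆ L, (a ∈ ξ(p) for all a ∈ A) iff ⨅ A ∈ ξ(p); for all a, b ∈ L, a ≤ b iff (for every p ∈ Σ, a ∈ ξ(p) implies b ∈ ξ(p)); and ξ is injective. -/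
/-- A based complete lattice `(Σ, L)` (with `Σ` an
order-generating subset of `L` not containing `⊥`), equipped with
`ξ p = [p, I]`, is a state determined state property system. -/
theorem based_complete_lattice_gives_state_property_system
    {L : Type*} [CompleteLattice L] (Sig : Set L)
    (hbot : (⊥ : L) ∉ Sig)
    (hog : ∀ a : L, a = sSup {x | x ∈ Sig ∧ x ≤ a}) :
    (let ξ : Sig → Set L := fun p => {a : L | (p : L) ≤ a}
    (∀ p : Sig, ⊤ ∈ ξ p) ∧
    (∀ p : Sig, ⊥ ∉ ξ p) ∧
    (∀ (p : Sig) (A : Set L), (∀ a ∈ A, a ∈ ξ p) ↔ sInf A ∈ ξ p) ∧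
    (∀ a b : L, a ≤ b ↔ ∀ p : Sig, a ∈ ξ p → b ∈ ξ p) ∧
    Function.Injective ξ) := by
  intro ξ
  refine ⟨fun p => le_top, ?_, ?_, ?_, ?_⟩
  · rintro p hp
    have : (p : L) = ⊥ := le_bot_iff.mp hp
    exact hbot (this ▸ p.2)
  · intro p A
    exact (le_sInf_iff).symm
  · intro a b
    constructor
    · intro hab p hpa
      exact le_trans hpa hab
    · intro h
      calc a = sSup {x | x ∈ Sig ∧ x ≤ a} := hog a
        _ ≤ b := sSup_le (fun x ⟨hx, hxa⟩ => h ⟨x, hx⟩ hxa)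
  · intro p q hpq
    have h1 : (p : L) ≤ q := by
      have : (q : L) ∈ ξ q := le_refl _
      rw [← hpq] at this; exact this
    have h2 : (q : L) ≤ p := by
      have : (p : L) ∈ ξ p := le_refl _
      rw [hpq] at this; exact this
    exact Subtype.ext (le_antisymm h1 h2)
end

section
/- Let (m, n) : (Σ', L', ξ') → (Σ, L, ξ) be a morphism of state property systems, and let n_* : L' → L be the lower adjoint of n, n_*(a') = ⨅ {a ∈ L | a' ≤ n(a)}. Then n_* maps strongest actual properties to strongest actual properties along m: for every p' ∈ Σ', n_*(⨅ ξ'(p')) = ⨅ ξ(m(p')). In particular n_*(Σ'^{ξ'}) ⊆ Σ^ξ, where Σ^ξ = {⨅ ξ(p) | p ∈ Σ}. -/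
/-- For a morphism `(m, n)` of state property systems, the lower
adjoint `n_*` of `n` maps the strongest actual property of a state `p'` to the
strongest actual property of `m p'`; in particular `n_*` maps `Σ'^{ξ'}` into
`Σ^ξ`. -/
theorem lower_adjoint_maps_states
    {S L S' L' : Type*} [CompleteLattice L] [CompleteLattice L']
    (ξ : S → Set L) (ξ' : S' → Set L')
    (htop : ∀ p : S, ⊤ ∈ ξ p)
    (hbot : ∀ p : S, ⊥ ∉ ξ p)
    (hinf : ∀ (p : S) (A : Set L), (∀ a ∈ A, a ∈ ξ p) ↔ sInf A ∈ ξ p)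
    (hord : ∀ a b : L, a ≤ b ↔ ∀ r : S, a ∈ ξ r → b ∈ ξ r)
    (htop' : ∀ p : S', ⊤ ∈ ξ' p)
    (hbot' : ∀ p : S', ⊥ ∉ ξ' p)
    (hinf' : ∀ (p : S') (A : Set L'), (∀ a ∈ A, a ∈ ξ' p) ↔ sInf A ∈ ξ' p)
    (hord' : ∀ a b : L', a ≤ b ↔ ∀ r : S', a ∈ ξ' r → b ∈ ξ' r)
    (m : S' → S) (n : L → L')
    (hmn : ∀ (a : L) (p' : S'), a ∈ ξ (m p') ↔ n a ∈ ξ' p') :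
    (let nstar : L' → L := fun a' => sInf {a : L | a' ≤ n a}
    (∀ p' : S', nstar (sInf (ξ' p')) = sInf (ξ (m p'))) ∧
    (nstar '' Set.range (fun p' : S' => sInf (ξ' p')) ⊆
      Set.range (fun p : S => sInf (ξ p)))) := by
  intro nstar
  have key : ∀ p' : S', nstar (sInf (ξ' p')) = sInf (ξ (m p')) := by
    intro p'
    have hmem : sInf (ξ (m p')) ∈ ξ (m p') := (hinf (m p') (ξ (m p'))).mp (fun a ha => ha)
    have hmem' : sInf (ξ' p') ∈ ξ' p' := (hinf' p' (ξ' p')).mp (fun a ha => ha)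
    apply le_antisymm
    · apply sInf_le
      show sInf (ξ' p') ≤ n (sInf (ξ (m p')))
      exact sInf_le ((hmn _ p').mp hmem)
    · apply le_sInf
      intro a ha
      have : n a ∈ ξ' p' := (hord' _ _).mp ha p' hmem'
      exact sInf_le ((hmn a p').mpr this)
  refine ⟨key, ?_⟩
  rintro x ⟨y, ⟨p', rfl⟩, rfl⟩
  exact ⟨m p', (key p').symm⟩
end
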